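/- The matrix Ř satisfies the Yang–Baxter equation with spectral parameter: for independent variables x, y, z one has Ř₁(z/y)·Ř₂(z/x)·Ř₁(y/x) = Ř₂(y/x)·Ř₁(z/x)·Ř₂(z/y) as an identity of End(V⊗V⊗V)-valued rational functions in x, y, z. -/
import Mathlib


/-!
Common framework: matrix shuffle algebra machinery for quantum toroidal `gl_{n|m}`.
`V = K^{n+m}`; `End(V^{⊗N})` is modeled as matrices indexed by `Fin N → Fin (n+m)`.
The base field is a field of rational functions; `t^{1/2}` is the element `s`, `t = s^2`.
-/

noncomputable section

namespace PaperShuffle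

open Finset

variable {F : Type*} [Field F]

/-- `End(V^{⊗N})` for `V = K^d`, modeled as matrices indexed by `Fin N → Fin d`. -/
abbrev EndT (F : Type*) (d N : ℕ) := Matrix (Fin N → Fin d) (Fin N → Fin d) F

/-- ε_i: `1` (bosonic) for the first `n` indices, `−1` (fermionic) afterwards. -/
def eps (n : ℕ) {d : ℕ} (i : Fin d) : ℤ := if (i : ℕ) < n then 1 else -1

/-- Entries of the R-matrix `R(z)` of `U_t(gl_{n|m})` (with `d = n+m`, `t = s^2`):
row index pair `(a,b)`, column index pair `(c,e)`. -/
def Rent (n : ℕ) {d : ℕ} (s z : F) (a b c e : Fin d) : F :=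
  (if a = c ∧ b = e then
    (if a = b then ((eps n a : ℤ) : F) * (s ^ (-(eps n a)) - z * s ^ (eps n a)) / (1 - z)
     else 1) else 0)
  + (if b = c ∧ a = e ∧ a ≠ b then
      (s⁻¹ - s) * (if (a : ℕ) < (b : ℕ) then z else 1) / (1 - z) else 0)

/-- Entries of `Ř(z) = R(z) P`. -/
def Rchk (n : ℕ) {d : ℕ} (s z : F) (a b c e : Fin d) : F := Rent n s z a b e c

/-- The diagonal matrix `D`: `d_i = t^{1−i}` for `i ≤ n`, `d_i = −t^{i−2n}` for `i > n`
(1-indexed; here `i` is 0-indexed). -/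
def Dent (n : ℕ) {d : ℕ} (s : F) (i : Fin d) : F :=
  if (i : ℕ) < n then s ^ (-(2 * (i : ℤ))) else -(s ^ (2 * ((i : ℤ) + 1 - 2 * (n : ℤ))))

/-- Entries of `Ř^•(z) = (D ⊗ 1) Ř(z t^{m−n}) (1 ⊗ D⁻¹)`. -/
def Rchkb (n m : ℕ) {d : ℕ} (s z : F) (a b c e : Fin d) : F :=
  Dent n s a * Rchk n s (z * s ^ (2 * ((m : ℤ) - (n : ℤ)))) a b c e * (Dent n s e)⁻¹

/-- Place a two-site operator with entry function `E` at sites `a`, `b` of `N` sites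
(identity elsewhere). -/
def place2 {d N : ℕ} (a b : Fin N) (E : Fin d → Fin d → Fin d → Fin d → F) : EndT F d N :=
  Matrix.of fun f g =>
    if ∀ c : Fin N, c ≠ a → c ≠ b → f c = g c then E (f a) (f b) (g a) (g b) else 0

/-- A two-site operator placed at adjacent (0-indexed) sites `p, p+1` of `N` sites. -/
def adjOp {d : ℕ} (N : ℕ) (E : Fin d → Fin d → Fin d → Fin d → F) (p : ℕ) : EndT F d N :=
  if h : p + 1 < N then place2 ⟨p, by omega⟩ ⟨p + 1, h⟩ E else 1

/-- Safe tuple access. -/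
def vget {k : ℕ} (z : Fin k → F) (j : ℕ) : F := if h : j < k then z ⟨j, h⟩ else 0

/-- `Ř_{ω^l}(z, w) = ∏_{j=1}^{k} ∏_{i=1}^{l} Ř_{l+j−i}(w_{l−i+1}/z_j)`, the noncommutative
product ordered with the `(j,i) = (1,1)` factor leftmost and `i` increasing fastest,
realized on `N` tensor factors (generic entry family `Efam`). -/
def prodOmega {d : ℕ} (N : ℕ) (Efam : F → Fin d → Fin d → Fin d → Fin d → F)
    {k l : ℕ} (z : Fin k → F) (w : Fin l → F) : EndT F d N :=
  ((List.range k).flatMap fun j => (List.range l).map fun i =>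
    adjOp N (Efam (vget w (l - 1 - i) / vget z j)) (l + j - i - 1)).prod

/-- `Ř_{ω^l}(z, w)`. -/
def RcOmega (n : ℕ) {d : ℕ} (s : F) (N : ℕ) {k l : ℕ} (z : Fin k → F) (w : Fin l → F) :
    EndT F d N := prodOmega N (fun x => Rchk n s x) z w

/-- `Ř^•_{ω^l}(z, w)`. -/
def RcbOmega (n m : ℕ) {d : ℕ} (s : F) (N : ℕ) {k l : ℕ} (z : Fin k → F) (w : Fin l → F) :
    EndT F d N := prodOmega N (fun x => Rchkb n m s x) z w

/-- Partial trace over the last `k` of `l + k` tensor factors. -/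
def ptraceLast {d : ℕ} (l k : ℕ) (M : EndT F d (l + k)) : EndT F d l :=
  Matrix.of fun f g => ∑ h : Fin k → Fin d, M (Fin.append f h) (Fin.append g h)

/-- Partial trace over the first `k` of `k + l` tensor factors. -/
def ptraceFirst {d : ℕ} (k l : ℕ) (M : EndT F d (k + l)) : EndT F d l :=
  Matrix.of fun f g => ∑ h : Fin k → Fin d, M (Fin.append h f) (Fin.append h g)

/-- An `r`-site operator placed at the (0-indexed) sites `off, …, off+r−1` of `N` sites. -/
def placeIn {d : ℕ} (off : ℕ) {r N : ℕ} (X : EndT F d r) : EndT F d N :=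
  if h : off + r ≤ N then
    Matrix.of fun f g =>
      if ∀ c : Fin N, ((c : ℕ) < off ∨ off + r ≤ (c : ℕ)) → f c = g c then
        X (fun j => f ⟨off + (j : ℕ), by have := j.isLt; omega⟩)
          (fun j => g ⟨off + (j : ℕ), by have := j.isLt; omega⟩)
      else 0
  else 1

/-- An `r`-site operator placed at the sites enumerated by `p` (identity elsewhere). -/
def placeList {d r N : ℕ} (p : Fin r → Fin N) (X : EndT F d r) : EndT F d N :=
  Matrix.of fun f g =>
    if ∀ c : Fin N, (∀ i, p i ≠ c) → f c = g c then X (f ∘ p) (g ∘ p) else 0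

/-- The map `Ψ[X](z) = Tr_{k+1,…,2k} [Ř_{ω^k}(qz, z) · (id^{⊗k} ⊗ X(z))]`. -/
def PsiMap (n : ℕ) {d : ℕ} (s q : F) {k : ℕ} (X : (Fin k → F) → EndT F d k) :
    (Fin k → F) → EndT F d k := fun z =>
  ptraceLast k k (RcOmega n s (k + k) (fun j => q * z j) z * placeIn k (X z))

/-- The map `Ψ'[X](z) = Tr_{1,…,k} [Ř^•_{ω^k}(z, qz) · (X(z) ⊗ id^{⊗k})]`. -/
def PsiMap' (n m : ℕ) {d : ℕ} (s q : F) {k : ℕ} (X : (Fin k → F) → EndT F d k) :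
    (Fin k → F) → EndT F d k := fun z =>
  ptraceFirst k k (RcbOmega n m s (k + k) z (fun j => q * z j) * placeIn 0 (X z))

/-- `f(x) = (1 − t x)(1 − t⁻¹ x)/(1 − x)²` with `t = s²`. -/
def fdef (s x : F) : F := (1 - s ^ 2 * x) * (1 - (s ^ 2)⁻¹ * x) / (1 - x) ^ 2

/-- `Γ⁺_{A,B}` for `A` of size `r` and `B` of size `t`, on `N` sites. -/
def GammaPlus (n : ℕ) {d : ℕ} (s q : F) (N : ℕ) {r t : ℕ}
    (A : (Fin r → F) → EndT F d r) (B : (Fin t → F) → EndT F d t) (z : Fin N → F) :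
    EndT F d N :=
  placeIn t (A fun j => vget z (t + (j : ℕ))) *
    RcOmega n s N (fun j : Fin r => q * vget z (t + (j : ℕ))) (fun i : Fin t => vget z (i : ℕ)) *
    placeIn r (B fun i => vget z (i : ℕ)) *
    RcOmega n s N (fun i : Fin t => vget z (i : ℕ)) (fun j : Fin r => vget z (t + (j : ℕ)))

/-- `Γ'_{A,B}` for `A` of size `r` and `B` of size `t`, on `N` sites. -/
def GammaPrime (n m : ℕ) {d : ℕ} (s q : F) (N : ℕ) {r t : ℕ}
    (A : (Fin r → F) → EndT F d r) (B : (Fin t → F) → EndT F d t) (z : Fin N → F) :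
    EndT F d N :=
  placeIn 0 (A fun j => vget z (j : ℕ)) *
    RcbOmega n m s N (fun i : Fin t => vget z (r + (i : ℕ)))
      (fun j : Fin r => q * vget z (j : ℕ)) *
    placeIn 0 (B fun i => vget z (r + (i : ℕ))) *
    RcOmega n s N (fun j : Fin r => vget z (j : ℕ)) (fun i : Fin t => vget z (r + (i : ℕ)))

/-- The shuffle product `A * B` (direct decomposition formula), on `N = k + l` sites. -/
def shuffleDirect (n : ℕ) {d : ℕ} (s q : F) (N : ℕ) {k l : ℕ}
    (A : (Fin k → F) → EndT F d k) (B : (Fin l → F) → EndT F d l) :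
    (Fin N → F) → EndT F d N := fun z =>
  ∑ S ∈ Finset.powersetCard k (Finset.univ : Finset (Fin N)),
    if h : S.card = k ∧ Sᶜ.card = l then
      let a : Fin k → Fin N := fun i => (S.orderIsoOfFin h.1 i : Fin N)
      let b : Fin l → Fin N := fun j => (Sᶜ.orderIsoOfFin h.2 j : Fin N)
      ((List.finRange k).reverse.flatMap fun i => (List.finRange l).map fun j =>
          if a i < b j then place2 (a i) (b j) (Rent n s (z (a i) / z (b j))) else 1).prod *
        placeList a (A fun i => z (a i)) *
        ((List.finRange k).flatMap fun i => (List.finRange l).reverse.map fun j =>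
          place2 (b j) (a i) (Rent n s (z (b j) / (q * z (a i))))).prod *
        placeList b (B fun j => z (b j)) *
        ((List.finRange k).reverse.flatMap fun i => (List.finRange l).map fun j =>
          if b j < a i then place2 (a i) (b j) (Rent n s (z (a i) / z (b j))) else 1).prod
    else 0

/-- Reindexing of `End(V^{⊗a})` along an equality `a = b`. -/
def castE {d : ℕ} {a b : ℕ} (h : a = b) (X : EndT F d a) : EndT F d b :=
  Matrix.of fun f g => X (f ∘ Fin.cast h) (g ∘ Fin.cast h)

/-! Canonical reduced-word matrices `Ř_σ`. -/

/-- First left descent of `σ` (an index `i` with `σ⁻¹(i) > σ⁻¹(i+1)`, 0-indexed). -/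
def descent? {N : ℕ} (σ : Equiv.Perm (Fin N)) : Option ℕ :=
  (List.range (N - 1)).find? fun i =>
    if h : i + 1 < N then decide (σ⁻¹ ⟨i + 1, h⟩ < σ⁻¹ ⟨i, by omega⟩) else false

/-- Fueled recursion computing `Ř_σ(z)` via `Ř_σ = Ř_i(z_{σ'(i+1)}/z_{σ'(i)}) Ř_{σ'}`
whenever `σ = s_i σ'` is a reduced decomposition. -/
def RsigmaAux (n : ℕ) {d : ℕ} (s : F) {N : ℕ} (z : Fin N → F) :
    ℕ → Equiv.Perm (Fin N) → EndT F d N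
  | 0, _ => 1
  | fuel + 1, σ =>
    match descent? σ with
    | none => 1
    | some i =>
      if h : i + 1 < N then
        let σ' := Equiv.swap ⟨i, by omega⟩ ⟨i + 1, h⟩ * σ
        adjOp N (Rchk n s (z (σ' ⟨i + 1, h⟩) / z (σ' ⟨i, by omega⟩))) i *
          RsigmaAux n s z fuel σ'
      else 1

/-- `Ř_σ(z)`. -/
def Rsigma (n : ℕ) {d : ℕ} (s : F) {N : ℕ} (z : Fin N → F) (σ : Equiv.Perm (Fin N)) :
    EndT F d N := RsigmaAux n s z (N * N) σ

/-- `f_σ(z) = ∏_{i<j, σ(i)>σ(j)} f(z_{σ(j)}/z_{σ(i)})`. -/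
def fsigma {N : ℕ} (s : F) (z : Fin N → F) (σ : Equiv.Perm (Fin N)) : F :=
  ∏ p ∈ (Finset.univ : Finset (Fin N × Fin N)).filter
      (fun p => p.1 < p.2 ∧ σ p.2 < σ p.1),
    fdef s (z (σ p.2) / z (σ p.1))

/-- Minimal-length representatives of `S_N/(S_c × S_{N-c})`: permutations increasing on the
first block `{1,…,c}` and on the second block `{c+1,…,N}` of positions. -/
def IsMinRep {N : ℕ} (c : ℕ) (σ : Equiv.Perm (Fin N)) : Prop :=
  ∀ i j : Fin N, i < j → ((j : ℕ) < c ∨ c ≤ (i : ℕ)) → σ i < σ j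

instance {N : ℕ} (c : ℕ) (σ : Equiv.Perm (Fin N)) : Decidable (IsMinRep c σ) := by
  unfold IsMinRep; infer_instance

/-- The shuffle product `A * B` written via `Γ⁺` and sums over minimal-length coset
representatives of `S_{r+t}/(S_t × S_r)`. -/
def starMul (n : ℕ) {d : ℕ} (s q : F) (N : ℕ) {r t : ℕ}
    (A : (Fin r → F) → EndT F d r) (B : (Fin t → F) → EndT F d t) :
    (Fin N → F) → EndT F d N := fun z =>
  ∑ σ ∈ (Finset.univ : Finset (Equiv.Perm (Fin N))).filter (IsMinRep t),
    (fsigma s z σ)⁻¹ •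
      ((Rsigma n s z σ)⁻¹ * GammaPlus n s q N A B (fun j => z (σ j)) * Rsigma n s z σ)

/-- The shuffle product `A *' B` written via `Γ'` and sums over minimal-length coset
representatives of `S_{r+t}/(S_r × S_t)`. -/
def starMulPrime (n m : ℕ) {d : ℕ} (s q : F) (N : ℕ) {r t : ℕ}
    (A : (Fin r → F) → EndT F d r) (B : (Fin t → F) → EndT F d t) :
    (Fin N → F) → EndT F d N := fun z =>
  ∑ σ ∈ (Finset.univ : Finset (Equiv.Perm (Fin N))).filter (IsMinRep r),
    (fsigma s z σ)⁻¹ •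
      ((Rsigma n s z σ)⁻¹ * GammaPrime n m s q N A B (fun j => z (σ j)) * Rsigma n s z σ)

/-! The base field of rational functions `ℚ(q, s, z₁, …, z_k)`. -/

/-- `ℚ(q, s, z₁, …, z_k)`. -/
abbrev KK (k : ℕ) := FractionRing (MvPolynomial (Fin 2 ⊕ Fin k) ℚ)

/-- The variable `q`. -/
def qv (k : ℕ) : KK k :=
  algebraMap (MvPolynomial (Fin 2 ⊕ Fin k) ℚ) (KK k) (MvPolynomial.X (Sum.inl 0))

/-- The variable `s = t^{1/2}`. -/
def sv (k : ℕ) : KK k :=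
  algebraMap (MvPolynomial (Fin 2 ⊕ Fin k) ℚ) (KK k) (MvPolynomial.X (Sum.inl 1))

/-- The variables `z₁, …, z_k` (0-indexed). -/
def zv (k : ℕ) (j : Fin k) : KK k :=
  algebraMap (MvPolynomial (Fin 2 ⊕ Fin k) ℚ) (KK k) (MvPolynomial.X (Sum.inr j))




def Bc (n : ℕ) {d : ℕ} (s x : F) (a b : Fin d) : F :=
  if a = b then ((eps n a : ℤ) : F) * (s ^ (-(eps n a)) - x * s ^ (eps n a)) / (1 - x) else 1

def Cc {d : ℕ} (s x : F) (a b : Fin d) : F :=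
  if a = b then 0 else (s⁻¹ - s) * (if (a : ℕ) < (b : ℕ) then x else 1) / (1 - x)

lemma Rchk_split (n : ℕ) {d : ℕ} (s x : F) (a b c e : Fin d) :
    Rchk n s x a b c e =
      (if c = b ∧ e = a then Bc n s x a b else 0) +
      (if c = a ∧ e = b then Cc s x a b else 0) := by
  unfold Rchk Rent Bc Cc
  rcases eq_or_ne a b with hab | hab
  · subst hab
    simp only [ne_eq, not_true_eq_false, and_false, if_false, if_pos rfl, if_true]
    by_cases h : c = a ∧ e = a
    · rw [if_pos ⟨h.2.symm, h.1.symm⟩, if_pos h, if_pos h, add_zero]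
    · rw [if_neg (by tauto), if_neg h, if_neg h, add_zero]
  · simp only [hab, ne_eq, not_false_eq_true, and_true, if_false]
    congr 1
    · exact if_congr ⟨fun ⟨h1, h2⟩ => ⟨h2.symm, h1.symm⟩, fun ⟨h1, h2⟩ => ⟨h2.symm, h1.symm⟩⟩ rfl rfl
    · exact if_congr ⟨fun ⟨h1, h2⟩ => ⟨h2.symm, h1.symm⟩, fun ⟨h1, h2⟩ => ⟨h2.symm, h1.symm⟩⟩ rfl rfl

def sw0 {α : Type*} (f : Fin 3 → α) : Fin 3 → α := ![f 1, f 0, f 2]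
def sw1 {α : Type*} (f : Fin 3 → α) : Fin 3 → α := ![f 0, f 2, f 1]

@[simp] lemma sw0_0 {α : Type*} (f : Fin 3 → α) : sw0 f 0 = f 1 := rfl
@[simp] lemma sw0_1 {α : Type*} (f : Fin 3 → α) : sw0 f 1 = f 0 := rfl
@[simp] lemma sw0_2 {α : Type*} (f : Fin 3 → α) : sw0 f 2 = f 2 := rfl
@[simp] lemma sw1_0 {α : Type*} (f : Fin 3 → α) : sw1 f 0 = f 0 := rfl
@[simp] lemma sw1_1 {α : Type*} (f : Fin 3 → α) : sw1 f 1 = f 2 := rfl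
@[simp] lemma sw1_2 {α : Type*} (f : Fin 3 → α) : sw1 f 2 = f 1 := rfl

@[simp] lemma sw0_sw0 {α : Type*} (f : Fin 3 → α) : sw0 (sw0 f) = f := by
  funext i; fin_cases i <;> rfl
@[simp] lemma sw1_sw1 {α : Type*} (f : Fin 3 → α) : sw1 (sw1 f) = f := by
  funext i; fin_cases i <;> rfl
@[simp] lemma braid {α : Type*} (f : Fin 3 → α) :
    sw1 (sw0 (sw1 f)) = sw0 (sw1 (sw0 f)) := by
  funext i; fin_cases i <;> rfl

lemma eq3 {α : Type*} (u v : Fin 3 → α) : u = v ↔ u 0 = v 0 ∧ u 1 = v 1 ∧ u 2 = v 2 := by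
  constructor
  · rintro rfl; exact ⟨rfl, rfl, rfl⟩
  · rintro ⟨h0, h1, h2⟩; funext i; fin_cases i <;> assumption

lemma entry0 (n : ℕ) {d : ℕ} (s x : F) (f h : Fin 3 → Fin d) :
    (if ∀ c : Fin 3, c ≠ 0 → c ≠ 1 → f c = h c
      then Rchk n s x (f 0) (f 1) (h 0) (h 1) else 0)
    = (if h = sw0 f then Bc n s x (f 0) (f 1) else 0)
      + (if h = f then Cc s x (f 0) (f 1) else 0) := by
  have hc : (∀ c : Fin 3, c ≠ 0 → c ≠ 1 → f c = h c) ↔ f 2 = h 2 := by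
    constructor
    · intro hh; exact hh 2 (by decide) (by decide)
    · intro hh c h0 h1; fin_cases c
      · exact absurd rfl h0
      · exact absurd rfl h1
      · exact hh
  rw [Rchk_split]
  by_cases h2 : f 2 = h 2
  · rw [if_pos (hc.2 h2)]
    congr 1
    · exact if_congr (by rw [eq3]; simp only [sw0_0, sw0_1, sw0_2]; tauto) rfl rfl
    · exact if_congr (by rw [eq3]; tauto) rfl rfl
  · rw [if_neg (fun hh => h2 (hc.1 hh)), if_neg, if_neg, add_zero]
    · intro hh; subst hh; exact h2 rfl
    · intro hh; subst hh; exact h2 rfl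

lemma entry1 (n : ℕ) {d : ℕ} (s x : F) (f h : Fin 3 → Fin d) :
    (if ∀ c : Fin 3, c ≠ 1 → c ≠ 2 → f c = h c
      then Rchk n s x (f 1) (f 2) (h 1) (h 2) else 0)
    = (if h = sw1 f then Bc n s x (f 1) (f 2) else 0)
      + (if h = f then Cc s x (f 1) (f 2) else 0) := by
  have hc : (∀ c : Fin 3, c ≠ 1 → c ≠ 2 → f c = h c) ↔ f 0 = h 0 := by
    constructor
    · intro hh; exact hh 0 (by decide) (by decide)
    · intro hh c h1 h2; fin_cases c
      · exact hh
      · exact absurd rfl h1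
      · exact absurd rfl h2
  rw [Rchk_split]
  by_cases h0 : f 0 = h 0
  · rw [if_pos (hc.2 h0)]
    congr 1
    · exact if_congr (by rw [eq3]; simp only [sw1_0, sw1_1, sw1_2]; tauto) rfl rfl
    · exact if_congr (by rw [eq3]; tauto) rfl rfl
  · rw [if_neg (fun hh => h0 (hc.1 hh)), if_neg, if_neg, add_zero]
    · intro hh; subst hh; exact h0 rfl
    · intro hh; subst hh; exact h0 rfl

lemma mul_adj0 (n : ℕ) {d : ℕ} (s x : F) (M : EndT F d 3) (f g : Fin 3 → Fin d) :
    ((adjOp 3 (Rchk n s x) 0 : EndT F d 3) * M) f g =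
      Bc n s x (f 0) (f 1) * M (sw0 f) g + Cc s x (f 0) (f 1) * M f g := by
  rw [Matrix.mul_apply]
  have hadj : adjOp 3 (Rchk n s x) 0 = place2 (d := d) (N := 3) 0 1 (Rchk n s x) := by
    rw [adjOp, dif_pos (by norm_num)]
    congr 1 <;> exact Fin.ext (by norm_num)
  rw [hadj]
  have : ∀ h : Fin 3 → Fin d, place2 (d := d) (N := 3) 0 1 (Rchk n s x) f h * M h g
      = (if h = sw0 f then Bc n s x (f 0) (f 1) else 0) * M h g
        + (if h = f then Cc s x (f 0) (f 1) else 0) * M h g := by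
    intro h
    rw [place2, Matrix.of_apply, entry0, add_mul]
  rw [Finset.sum_congr rfl fun h _ => this h, Finset.sum_add_distrib]
  simp [ite_mul, Finset.sum_ite_eq']

lemma mul_adj1 (n : ℕ) {d : ℕ} (s x : F) (M : EndT F d 3) (f g : Fin 3 → Fin d) :
    ((adjOp 3 (Rchk n s x) 1 : EndT F d 3) * M) f g =
      Bc n s x (f 1) (f 2) * M (sw1 f) g + Cc s x (f 1) (f 2) * M f g := by
  rw [Matrix.mul_apply]
  have hadj : adjOp 3 (Rchk n s x) 1 = place2 (d := d) (N := 3) 1 2 (Rchk n s x) := by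
    rw [adjOp, dif_pos (by norm_num)]
    congr 1 <;> exact Fin.ext (by norm_num)
  rw [hadj]
  have : ∀ h : Fin 3 → Fin d, place2 (d := d) (N := 3) 1 2 (Rchk n s x) f h * M h g
      = (if h = sw1 f then Bc n s x (f 1) (f 2) else 0) * M h g
        + (if h = f then Cc s x (f 1) (f 2) else 0) * M h g := by
    intro h
    rw [place2, Matrix.of_apply, entry1, add_mul]
  rw [Finset.sum_congr rfl fun h _ => this h, Finset.sum_add_distrib]
  simp [ite_mul, Finset.sum_ite_eq']

lemma adj0_apply (n : ℕ) {d : ℕ} (s x : F) (f g : Fin 3 → Fin d) :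
    (adjOp 3 (Rchk n s x) 0 : EndT F d 3) f g =
      Bc n s x (f 0) (f 1) * (if sw0 f = g then (1 : F) else 0)
      + Cc s x (f 0) (f 1) * (if f = g then (1 : F) else 0) := by
  have h := mul_adj0 n s x 1 f g
  rw [mul_one] at h
  rw [h, Matrix.one_apply, Matrix.one_apply]

lemma adj1_apply (n : ℕ) {d : ℕ} (s x : F) (f g : Fin 3 → Fin d) :
    (adjOp 3 (Rchk n s x) 1 : EndT F d 3) f g =
      Bc n s x (f 1) (f 2) * (if sw1 f = g then (1 : F) else 0)
      + Cc s x (f 1) (f 2) * (if f = g then (1 : F) else 0) := by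
  have h := mul_adj1 n s x 1 f g
  rw [mul_one] at h
  rw [h, Matrix.one_apply, Matrix.one_apply]


lemma Cc_self {d : ℕ} (s x : F) (a : Fin d) : Cc s x a a = 0 := if_pos rfl

lemma Bc_ne {d : ℕ} {a b : Fin d} (h : a ≠ b) {n : ℕ} {s x : F} : Bc n s x a b = 1 :=
  if_neg h

lemma Bc_self (n : ℕ) {d : ℕ} (s x : F) (a : Fin d) :
    Bc n s x a a =
      if (a : ℕ) < n then (s⁻¹ - x * s) / (1 - x) else (x * s⁻¹ - s) / (1 - x) := by
  rw [Bc, if_pos rfl]; unfold eps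
  split_ifs with h <;> simp [zpow_one, zpow_neg] <;> ring

section Identities
set_option maxHeartbeats 3000000

variable {d : ℕ} (n : ℕ) (s x1 x3 : F) (hs : s ≠ 0) (h1 : 1 - x1 ≠ 0)
  (h3 : 1 - x3 ≠ 0) (h2 : 1 - x1 * x3 ≠ 0)

include hs h1 h3 h2

lemma I1lem {i j k : Fin d} (hij : i ≠ j) (hjk : j ≠ k) :
    Cc s x1 i j * Cc s (x1 * x3) j k * Cc s x3 i j
      = Cc s x3 j k * Cc s (x1 * x3) i j * Cc s x1 j k := by
  have hij' : (i : ℕ) ≠ (j : ℕ) := fun h => hij (Fin.val_injective h)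
  have hjk' : (j : ℕ) ≠ (k : ℕ) := fun h => hjk (Fin.val_injective h)
  simp only [Cc, if_neg hij, if_neg hjk]
  split_ifs <;>
    first
      | omega
      | ring1
      | (field_simp; ring1)
      | (field_simp; rw [div_eq_iff (by simp [mul_eq_zero, hs, h1, h3, h2])]; ring1)
      | (field_simp; rw [eq_div_iff (by simp [mul_eq_zero, hs, h1, h3, h2])]; ring1)
      | (field_simp; left; ring1)

lemma I2lem {i j k : Fin d} (hij : i ≠ j) (hjk : j ≠ k) (hik : i ≠ k) :
    Cc s (x1 * x3) i k * Cc s x3 j i + Cc s x1 i j * Cc s (x1 * x3) j k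
      = Cc s x3 j k * Cc s x1 i k := by
  have hij' : (i : ℕ) ≠ (j : ℕ) := fun h => hij (Fin.val_injective h)
  have hjk' : (j : ℕ) ≠ (k : ℕ) := fun h => hjk (Fin.val_injective h)
  have hik' : (i : ℕ) ≠ (k : ℕ) := fun h => hik (Fin.val_injective h)
  simp only [Cc, if_neg hij, if_neg hjk, if_neg hik, if_neg hij.symm]
  split_ifs <;>
    first
      | omega
      | ring1
      | (field_simp; ring1)
      | (field_simp; rw [div_eq_iff (by simp [mul_eq_zero, hs, h1, h3, h2])]; ring1)
      | (field_simp; rw [eq_div_iff (by simp [mul_eq_zero, hs, h1, h3, h2])]; ring1)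
      | (field_simp; left; ring1)

lemma I3lem {i j k : Fin d} (hij : i ≠ j) (hjk : j ≠ k) (hik : i ≠ k) :
    Cc s x1 i j * Cc s x3 i k
      = Cc s (x1 * x3) i k * Cc s x1 k j + Cc s x3 j k * Cc s (x1 * x3) i j := by
  have hij' : (i : ℕ) ≠ (j : ℕ) := fun h => hij (Fin.val_injective h)
  have hjk' : (j : ℕ) ≠ (k : ℕ) := fun h => hjk (Fin.val_injective h)
  have hik' : (i : ℕ) ≠ (k : ℕ) := fun h => hik (Fin.val_injective h)
  simp only [Cc, if_neg hij, if_neg hjk, if_neg hik, if_neg hjk.symm]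
  split_ifs <;>
    first
      | omega
      | ring1
      | (field_simp; ring1)
      | (field_simp; rw [div_eq_iff (by simp [mul_eq_zero, hs, h1, h3, h2])]; ring1)
      | (field_simp; rw [eq_div_iff (by simp [mul_eq_zero, hs, h1, h3, h2])]; ring1)
      | (field_simp; left; ring1)

lemma J1lem {i k : Fin d} (hik : i ≠ k) :
    Bc n s x1 i i * Cc s (x1 * x3) i k * Bc n s x3 i i
      = Cc s (x1 * x3) i k + Cc s x3 i k * Bc n s (x1 * x3) i i * Cc s x1 i k := by
  have hik' : (i : ℕ) ≠ (k : ℕ) := fun h => hik (Fin.val_injective h)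
  simp only [Cc, Bc_self, if_neg hik]
  split_ifs <;>
    first
      | omega
      | ring1
      | (field_simp; ring1)
      | (field_simp; rw [div_eq_iff (by simp [mul_eq_zero, hs, h1, h3, h2])]; ring1)
      | (field_simp; rw [eq_div_iff (by simp [mul_eq_zero, hs, h1, h3, h2])]; ring1)
      | (field_simp; left; ring1)

lemma J2lem {i k : Fin d} (hik : i ≠ k) :
    Bc n s x1 i i * Cc s x3 i k
      = Cc s (x1 * x3) i k * Cc s x1 k i + Cc s x3 i k * Bc n s (x1 * x3) i i := by
  have hik' : (i : ℕ) ≠ (k : ℕ) := fun h => hik (Fin.val_injective h)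
  simp only [Cc, Bc_self, if_neg hik, if_neg hik.symm]
  split_ifs <;>
    first
      | omega
      | ring1
      | (field_simp; ring1)
      | (field_simp; rw [div_eq_iff (by simp [mul_eq_zero, hs, h1, h3, h2])]; ring1)
      | (field_simp; rw [eq_div_iff (by simp [mul_eq_zero, hs, h1, h3, h2])]; ring1)
      | (field_simp; left; ring1)

lemma K1lem {i j : Fin d} (hij : i ≠ j) :
    Cc s (x1 * x3) i j + Cc s x1 i j * Bc n s (x1 * x3) j j * Cc s x3 i j
      = Bc n s x3 j j * Cc s (x1 * x3) i j * Bc n s x1 j j := by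
  have hij' : (i : ℕ) ≠ (j : ℕ) := fun h => hij (Fin.val_injective h)
  simp only [Cc, Bc_self, if_neg hij]
  split_ifs <;>
    first
      | omega
      | ring1
      | (field_simp; ring1)
      | (field_simp; rw [div_eq_iff (by simp [mul_eq_zero, hs, h1, h3, h2])]; ring1)
      | (field_simp; rw [eq_div_iff (by simp [mul_eq_zero, hs, h1, h3, h2])]; ring1)
      | (field_simp; left; ring1)

lemma K2lem {i j : Fin d} (hij : i ≠ j) :
    Cc s (x1 * x3) i j * Cc s x3 j i + Cc s x1 i j * Bc n s (x1 * x3) j j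
      = Bc n s x3 j j * Cc s x1 i j := by
  have hij' : (i : ℕ) ≠ (j : ℕ) := fun h => hij (Fin.val_injective h)
  simp only [Cc, Bc_self, if_neg hij, if_neg hij.symm]
  split_ifs <;>
    first
      | omega
      | ring1
      | (field_simp; ring1)
      | (field_simp; rw [div_eq_iff (by simp [mul_eq_zero, hs, h1, h3, h2])]; ring1)
      | (field_simp; rw [eq_div_iff (by simp [mul_eq_zero, hs, h1, h3, h2])]; ring1)
      | (field_simp; left; ring1)

lemma M1lem {i j : Fin d} (hij : i ≠ j) :
    Cc s x1 i j * Cc s (x1 * x3) j i * Cc s x3 i j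
      = Cc s x3 j i * Cc s (x1 * x3) i j * Cc s x1 j i := by
  have hij' : (i : ℕ) ≠ (j : ℕ) := fun h => hij (Fin.val_injective h)
  simp only [Cc, if_neg hij, if_neg hij.symm]
  split_ifs <;>
    first
      | omega
      | ring1
      | (field_simp; ring1)
      | (field_simp; rw [div_eq_iff (by simp [mul_eq_zero, hs, h1, h3, h2])]; ring1)
      | (field_simp; rw [eq_div_iff (by simp [mul_eq_zero, hs, h1, h3, h2])]; ring1)
      | (field_simp; left; ring1)

lemma M2lem {i j : Fin d} (hij : i ≠ j) :
    Bc n s (x1 * x3) i i * Cc s x3 j i + Cc s x1 i j * Cc s (x1 * x3) j i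
      = Cc s x3 j i * Bc n s x1 i i := by
  have hij' : (i : ℕ) ≠ (j : ℕ) := fun h => hij (Fin.val_injective h)
  simp only [Cc, Bc_self, if_neg hij, if_neg hij.symm]
  split_ifs <;>
    first
      | omega
      | ring1
      | (field_simp; ring1)
      | (field_simp; rw [div_eq_iff (by simp [mul_eq_zero, hs, h1, h3, h2])]; ring1)
      | (field_simp; rw [eq_div_iff (by simp [mul_eq_zero, hs, h1, h3, h2])]; ring1)
      | (field_simp; left; ring1)

lemma M3lem {i j : Fin d} (hij : i ≠ j) :
    Cc s x1 i j * Bc n s x3 i i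
      = Bc n s (x1 * x3) i i * Cc s x1 i j + Cc s x3 j i * Cc s (x1 * x3) i j := by
  have hij' : (i : ℕ) ≠ (j : ℕ) := fun h => hij (Fin.val_injective h)
  simp only [Cc, Bc_self, if_neg hij, if_neg hij.symm]
  split_ifs <;>
    first
      | omega
      | ring1
      | (field_simp; ring1)
      | (field_simp; rw [div_eq_iff (by simp [mul_eq_zero, hs, h1, h3, h2])]; ring1)
      | (field_simp; rw [eq_div_iff (by simp [mul_eq_zero, hs, h1, h3, h2])]; ring1)
      | (field_simp; left; ring1)

end Identities

section Merge
variable {α : Type*} {f : Fin 3 → α}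

lemma sw0_eq (h : f 0 = f 1) : sw0 f = f := by
  funext i; fin_cases i <;> simp [sw0, sw1, h]
lemma sw1_eq (h : f 1 = f 2) : sw1 f = f := by
  funext i; fin_cases i <;> simp [sw0, sw1, h]
lemma m12 (h : f 1 = f 2) : sw0 (sw1 (sw0 f)) = sw1 (sw0 f) := by
  funext i; fin_cases i <;> simp [sw0, sw1, h]
lemma m02a (h : f 0 = f 2) : sw1 (sw0 f) = sw0 f := by
  funext i; fin_cases i <;> simp [sw0, sw1, h]
lemma m02b (h : f 0 = f 2) : sw0 (sw1 f) = sw1 f := by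
  funext i; fin_cases i <;> simp [sw0, sw1, h]
lemma m02c (h : f 0 = f 2) : sw0 (sw1 (sw0 f)) = f := by
  funext i; fin_cases i <;> simp [sw0, sw1, h]

end Merge

set_option maxHeartbeats 1000000 in
lemma core (n : ℕ) {d : ℕ} (s x1 x2 x3 : F) (hs : s ≠ 0) (h1 : 1 - x1 ≠ 0)
    (h2 : 1 - x2 ≠ 0) (h3 : 1 - x3 ≠ 0) (hx : x2 = x1 * x3) (f g : Fin 3 → Fin d) :
    Bc n s x1 (f 0) (f 1) *
        (Bc n s x2 (f 0) (f 2) *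
            ((Bc n s x3 (f 1) (f 2) * if sw0 (sw1 (sw0 f)) = g then 1 else 0) +
              Cc s x3 (f 1) (f 2) * if sw1 (sw0 f) = g then 1 else 0) +
          Cc s x2 (f 0) (f 2) *
            ((Bc n s x3 (f 1) (f 0) * if f = g then 1 else 0) +
              Cc s x3 (f 1) (f 0) * if sw0 f = g then 1 else 0)) +
      Cc s x1 (f 0) (f 1) *
        (Bc n s x2 (f 1) (f 2) *
            ((Bc n s x3 (f 0) (f 2) * if sw0 (sw1 f) = g then 1 else 0) +
              Cc s x3 (f 0) (f 2) * if sw1 f = g then 1 else 0) +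
          Cc s x2 (f 1) (f 2) *
            ((Bc n s x3 (f 0) (f 1) * if sw0 f = g then 1 else 0) +
              Cc s x3 (f 0) (f 1) * if f = g then 1 else 0)) =
    Bc n s x3 (f 1) (f 2) *
        (Bc n s x2 (f 0) (f 2) *
            ((Bc n s x1 (f 0) (f 1) * if sw0 (sw1 (sw0 f)) = g then 1 else 0) +
              Cc s x1 (f 0) (f 1) * if sw0 (sw1 f) = g then 1 else 0) +
          Cc s x2 (f 0) (f 2) *
            ((Bc n s x1 (f 2) (f 1) * if f = g then 1 else 0) +
              Cc s x1 (f 2) (f 1) * if sw1 f = g then 1 else 0)) +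
      Cc s x3 (f 1) (f 2) *
        (Bc n s x2 (f 0) (f 1) *
            ((Bc n s x1 (f 0) (f 2) * if sw1 (sw0 f) = g then 1 else 0) +
              Cc s x1 (f 0) (f 2) * if sw0 f = g then 1 else 0) +
          Cc s x2 (f 0) (f 1) *
            ((Bc n s x1 (f 1) (f 2) * if sw1 f = g then 1 else 0) +
              Cc s x1 (f 1) (f 2) * if f = g then 1 else 0)) := by
  subst hx
  by_cases h01 : f 0 = f 1 <;> by_cases h12 : f 1 = f 2
  · -- all equal
    simp only [sw0_eq h01, sw1_eq h12]
    simp only [← h01, ← h12]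
    simp only [Cc_self, zero_mul, mul_zero, add_zero, zero_add]
    ring
  · -- f 0 = f 1 ≠ f 2
    have h02 : f 0 ≠ f 2 := fun h => h12 (h01.symm.trans h)
    simp only [sw0_eq h01]
    simp only [← h01]
    simp only [Cc_self, Bc_ne h02, Bc_ne (Ne.symm h02), zero_mul, mul_zero, add_zero,
      zero_add, one_mul, mul_one]
    have hJ1 := J1lem n s x1 x3 hs h1 h3 h2 h02
    have hJ2 := J2lem n s x1 x3 hs h1 h3 h2 h02
    linear_combination hJ1 * (if f = g then (1 : F) else 0) +
      hJ2 * (if sw1 f = g then (1 : F) else 0)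
  · -- f 1 = f 2 ≠ f 0
    have h02 : f 0 ≠ f 2 := fun h => h01 (h.trans h12.symm)
    simp only [sw1_eq h12, m12 h12]
    simp only [← h12]
    simp only [Cc_self, Bc_ne h01, Bc_ne (Ne.symm h01), zero_mul, mul_zero, add_zero,
      zero_add, one_mul, mul_one]
    have hK1 := K1lem n s x1 x3 hs h1 h3 h2 h01
    have hK2 := K2lem n s x1 x3 hs h1 h3 h2 h01
    linear_combination hK1 * (if f = g then (1 : F) else 0) +
      hK2 * (if sw0 f = g then (1 : F) else 0)
  · by_cases h02 : f 0 = f 2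
    · -- f 0 = f 2 ≠ f 1
      simp only [m02a h02, m02b h02, m02c h02]
      simp only [← h02]
      simp only [Cc_self, Bc_ne h01, Bc_ne (Ne.symm h01), zero_mul, mul_zero, add_zero,
        zero_add, one_mul, mul_one]
      have hM1 := M1lem s x1 x3 hs h1 h3 h2 h01
      have hM2 := M2lem n s x1 x3 hs h1 h3 h2 h01
      have hM3 := M3lem n s x1 x3 hs h1 h3 h2 h01
      linear_combination hM1 * (if f = g then (1 : F) else 0) +
        hM2 * (if sw0 f = g then (1 : F) else 0) +
        hM3 * (if sw1 f = g then (1 : F) else 0)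
    · -- all distinct
      simp only [Bc_ne h01, Bc_ne (Ne.symm h01), Bc_ne h12, Bc_ne (Ne.symm h12), Bc_ne h02,
        Bc_ne (Ne.symm h02), one_mul, mul_one]
      have hI1 := I1lem s x1 x3 hs h1 h3 h2 h01 h12
      have hI2 := I2lem s x1 x3 hs h1 h3 h2 h01 h12 h02
      have hI3 := I3lem s x1 x3 hs h1 h3 h2 h01 h12 h02
      linear_combination hI1 * (if f = g then (1 : F) else 0) +
        hI2 * (if sw0 f = g then (1 : F) else 0) +
        hI3 * (if sw1 f = g then (1 : F) else 0)


lemma hzv_ne (j : Fin 3) : zv 3 j ≠ 0 := by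
  unfold zv
  rw [ne_eq, IsFractionRing.to_map_eq_zero_iff]
  exact MvPolynomial.X_ne_zero _
lemma hsv_ne : sv 3 ≠ 0 := by
  unfold sv
  rw [ne_eq, IsFractionRing.to_map_eq_zero_iff]
  exact MvPolynomial.X_ne_zero _
lemma hzv_ne' {j j' : Fin 3} (h : j ≠ j') : zv 3 j ≠ zv 3 j' := by
  unfold zv
  intro hh
  exact h (Sum.inr_injective (MvPolynomial.X_injective
    (IsFractionRing.injective (MvPolynomial (Fin 2 ⊕ Fin 3) ℚ) (KK 3) hh)))
lemma hdiv_ne {j j' : Fin 3} (h : j ≠ j') : 1 - zv 3 j / zv 3 j' ≠ 0 := by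
  rw [sub_ne_zero]
  intro hh
  rw [eq_comm, div_eq_one_iff_eq (hzv_ne j')] at hh
  exact hzv_ne' h hh

/-- Yang–Baxter equation: for independent variables `x, y, z`,
`Ř₁(z/y) Ř₂(z/x) Ř₁(y/x) = Ř₂(y/x) Ř₁(z/x) Ř₂(z/y)` in `End(V ⊗ V ⊗ V)`,
as an identity of rational functions. Here `x := z₁`, `y := z₂`, `z := z₃` are the
independent variables of `ℚ(q,s,x,y,z)`, and `Ř₁, Ř₂` act at (1-indexed) sites
`(1,2)` and `(2,3)` respectively. -/
theorem yang_baxter_equation (n m : ℕ) (hnm : 1 ≤ n + m) :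
    adjOp 3 (Rchk (d := n + m) n (sv 3) (zv 3 2 / zv 3 1)) 0 *
      adjOp 3 (Rchk (d := n + m) n (sv 3) (zv 3 2 / zv 3 0)) 1 *
      adjOp 3 (Rchk (d := n + m) n (sv 3) (zv 3 1 / zv 3 0)) 0 =
    adjOp 3 (Rchk (d := n + m) n (sv 3) (zv 3 1 / zv 3 0)) 1 *
      adjOp 3 (Rchk (d := n + m) n (sv 3) (zv 3 2 / zv 3 0)) 0 *
      adjOp 3 (Rchk (d := n + m) n (sv 3) (zv 3 2 / zv 3 1)) 1 := by
  have hx : zv 3 2 / zv 3 0 = (zv 3 2 / zv 3 1) * (zv 3 1 / zv 3 0) := by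
    have h0 := hzv_ne 0
    have h1 := hzv_ne 1
    have h2 := hzv_ne 2
    field_simp
  ext f g
  rw [Matrix.mul_assoc, Matrix.mul_assoc]
  simp only [mul_adj0, mul_adj1, adj0_apply, adj1_apply, sw0_0, sw0_1, sw0_2, sw1_0,
    sw1_1, sw1_2, sw0_sw0, sw1_sw1, braid]
  exact core n (sv 3) _ _ _ hsv_ne (hdiv_ne (by decide)) (hdiv_ne (by decide))
    (hdiv_ne (by decide)) hx f g


end PaperShuffle
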